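/- Fix a real α with 0 < α < 1 and a real τ > 0. Define for an integer d ≥ 1 and real t ≥ 0 the normalized gradient-descent loss r_d(t) = (1/H_{d,α}) · Σ_{k=1}^d k^{−α}(1 − k^{−α})^{2t}, where H_{d,α} = Σ_{k=1}^d k^{−α}. Then lim_{d→∞} r_d(τ·d^α/2) = ((1−α)/α) · τ^{(1/α)−1} · ∫_τ^∞ z^{−1/α} e^{−z} dz. -/

import Mathlib

/-!
Writing `c = ⌈d x⌉₊ / d`, both normalized sums are, up to the common factor `d^{α-1}`, integrals
over `(0, 1]` of the step functions `c^{-α} (1 - (c d)^{-α})^{τ d^α}` and `c^{-α}`. Since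
`(c d)^{-α} τ d^α = τ c^{-α}`, the first tends pointwise to `x^{-α} e^{-τ x^{-α}}`, the second to
`x^{-α}`, and `x^{-α}` dominates both and is integrable because `α < 1`. The denominator limit is
`1/(1-α)`, and the substitution `z = τ x^{-α}` turns the numerator limit into
`α τ^{1-1/α} ∫_τ^∞ z^{-1/α} e^{-z} dz`.
-/

open Filter MeasureTheory Set Real Topology

theorem tendsto_one_add_rpow_of_tendsto_mul {ι : Type*} {l : Filter ι} {u v : ι → ℝ} {c : ℝ}
    (hu : Tendsto u l (𝓝 0)) (huv : Tendsto (fun i => v i * u i) l (𝓝 c)) :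
    Tendsto (fun i => (1 + u i) ^ v i) l (𝓝 (exp c)) := by
  set g : ℝ → ℝ := fun y => log (1 + y)
  have hg : HasDerivAt g 1 0 := by
    simpa using ((hasDerivAt_id (0:ℝ)).const_add 1).log (by norm_num)
  -- `dslope g 0 y` is `log (1 + y) / y` for `y ≠ 0` and is continuous at `0`: no need for `u i ≠ 0`
  have hslope : Tendsto (fun i => dslope g 0 (u i)) l (𝓝 1) := by
    have := (continuousAt_dslope_same.2 hg.differentiableAt).tendsto.comp hu
    rwa [dslope_same, hg.deriv] at this
  have hlog : ∀ y, g y = y * dslope g 0 y := fun y => by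
    simpa [g] using (sub_smul_dslope g 0 y).symm
  have hexp := (huv.mul hslope).rexp
  rw [mul_one] at hexp
  refine hexp.congr' ?_
  filter_upwards [hu.eventually (lt_mem_nhds (show (-1:ℝ) < 0 by norm_num))] with i hi
  rw [rpow_def_of_pos (by linarith), mul_assoc, ← hlog, mul_comm]

theorem natCeil_eq_of_mem_Ioc {k : ℕ} {y : ℝ} (hy : y ∈ Ioc (k:ℝ) (k + 1 : ℕ)) :
    ⌈y⌉₊ = k + 1 := by
  rw [Nat.ceil_eq_iff (Nat.succ_ne_zero k)]
  push_cast at hy ⊢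
  simpa using hy

theorem intervalIntegral_natCeil_mul (f : ℕ → ℝ) {d : ℕ} (hd : 0 < d) :
    ∫ x in (0:ℝ)..1, f ⌈(d:ℝ) * x⌉₊ = (∑ k ∈ Finset.Icc 1 d, f k) / d := by
  have hunit (k : ℕ) :
      EqOn (fun y : ℝ => f ⌈y⌉₊) (fun _ => f (k + 1)) (Ioc (k:ℝ) (k + 1 : ℕ)) :=
    fun y hy => by simp only [natCeil_eq_of_mem_Ioc hy]
  have hk (k : ℕ) : (k:ℝ) ≤ (k + 1 : ℕ) := by norm_cast; omega
  have hint (k : ℕ) : ∫ y in (k:ℝ)..(k + 1 : ℕ), f ⌈y⌉₊ = f (k + 1) := by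
    rw [intervalIntegral.integral_of_le (hk k),
      setIntegral_congr_fun measurableSet_Ioc (hunit k)]
    simp
  have hii (k : ℕ) : IntervalIntegrable (fun y : ℝ => f ⌈y⌉₊) volume k (k + 1 : ℕ) := by
    rw [intervalIntegrable_iff_integrableOn_Ioc_of_le (hk k)]
    exact (integrableOn_congr_fun (hunit k) measurableSet_Ioc).2 (by simp)
  rw [intervalIntegral.integral_comp_mul_left (fun y => f ⌈y⌉₊) (by positivity), mul_zero,
    mul_one, ← Nat.cast_zero, ← intervalIntegral.sum_integral_adjacent_intervals (fun k _ => hii k)]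
  simp only [hint, Finset.range_eq_Ico, Finset.sum_Ico_add' f 0 d 1, smul_eq_mul]
  rw [inv_mul_eq_div]
  rfl

theorem tendsto_natCeil_mul_div {x : ℝ} (hx : 0 ≤ x) :
    Tendsto (fun d : ℕ => (⌈(d:ℝ) * x⌉₊ : ℝ) / d) atTop (𝓝 x) := by
  simpa only [mul_comm x, Function.comp_def] using
    (tendsto_nat_ceil_mul_div_atTop hx).comp tendsto_natCast_atTop_atTop

theorem le_natCeil_mul_div {x : ℝ} {d : ℕ} (hd : 0 < d) : x ≤ (⌈(d:ℝ) * x⌉₊ : ℝ) / d := by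
  rw [le_div_iff₀ (by positivity), mul_comm]
  exact Nat.le_ceil _

section LossTerm

variable {α : ℝ}

/-- The `k`-th term of the loss sum, with the weight `k^{-α}` rescaled to `(k/d)^{-α}` so that
`x ↦ lossTerm α E d ⌈d x⌉₊` is a Riemann step function on `(0, 1]`. -/
noncomputable def lossTerm (α E : ℝ) (d k : ℕ) : ℝ :=
  ((k : ℝ) / d) ^ (-α) * (1 - (k : ℝ) ^ (-α)) ^ E

theorem intervalIntegral_lossTerm (E : ℝ) {d : ℕ} (hd : 0 < d) :
    ∫ x in (0:ℝ)..1, lossTerm α E d ⌈(d:ℝ) * x⌉₊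
      = (d:ℝ) ^ (α - 1) * ∑ k ∈ Finset.Icc 1 d, (k:ℝ) ^ (-α) * (1 - (k:ℝ) ^ (-α)) ^ E := by
  have hd' : (0:ℝ) < d := by exact_mod_cast hd
  rw [intervalIntegral_natCeil_mul _ hd, rpow_sub hd', rpow_one, Finset.mul_sum, Finset.sum_div]
  refine Finset.sum_congr rfl fun k _ => ?_
  rw [lossTerm, div_rpow (Nat.cast_nonneg k) hd'.le, rpow_neg hd'.le]
  field_simp

theorem norm_lossTerm_natCeil_le (hα : 0 ≤ α) {E : ℝ} (hE : 0 ≤ E) {d : ℕ} (hd : 0 < d)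
    {x : ℝ} (hx : 0 < x) : ‖lossTerm α E d ⌈(d:ℝ) * x⌉₊‖ ≤ x ^ (-α) := by
  set k := ⌈(d:ℝ) * x⌉₊
  have hk : (1:ℝ) ≤ k := by exact_mod_cast Nat.one_le_ceil_iff.2 (by positivity)
  have hxk : x ≤ k / d := le_natCeil_mul_div hd
  have hpow : (k:ℝ) ^ (-α) ≤ 1 := rpow_le_one_of_one_le_of_nonpos hk (by linarith)
  have hbase : 0 ≤ 1 - (k:ℝ) ^ (-α) := by linarith
  have hfac : (1 - (k:ℝ) ^ (-α)) ^ E ≤ 1 :=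
    rpow_le_one hbase (by linarith [rpow_nonneg (zero_le_one.trans hk) (-α)]) hE
  rw [lossTerm, norm_mul, norm_of_nonneg (rpow_nonneg (by positivity) _),
    norm_of_nonneg (rpow_nonneg hbase _)]
  calc ((k:ℝ) / d) ^ (-α) * (1 - (k:ℝ) ^ (-α)) ^ E ≤ ((k:ℝ) / d) ^ (-α) :=
        mul_le_of_le_one_right (rpow_nonneg (by positivity) _) hfac
    _ ≤ x ^ (-α) := rpow_le_rpow_of_nonpos hx hxk (by linarith)

theorem tendsto_intervalIntegral_lossTerm (hα0 : 0 < α) (hα1 : α < 1) {E : ℕ → ℝ}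
    (hE : ∀ d, 0 ≤ E d) {G : ℝ → ℝ}
    (hG : ∀ x, 0 < x → Tendsto (fun d : ℕ => lossTerm α (E d) d ⌈(d:ℝ) * x⌉₊) atTop (𝓝 (G x))) :
    Tendsto (fun d : ℕ => ∫ x in (0:ℝ)..1, lossTerm α (E d) d ⌈(d:ℝ) * x⌉₊) atTop
      (𝓝 (∫ x in (0:ℝ)..1, G x)) := by
  refine intervalIntegral.tendsto_integral_filter_of_dominated_convergence (fun x => x ^ (-α))
    (Eventually.of_forall fun d => ?_) ?_
    (intervalIntegral.intervalIntegrable_rpow' (by linarith)) (ae_of_all _ fun x hx => hG x ?_)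
  · exact ((measurable_from_nat (f := lossTerm α (E d) d)).comp
      ((Nat.measurable_ceil (R := ℝ)).comp (measurable_id.const_mul (d:ℝ)))).aestronglyMeasurable
  · filter_upwards [eventually_gt_atTop 0] with d hd
    refine ae_of_all _ fun x hx => norm_lossTerm_natCeil_le hα0.le (hE d) hd ?_
    exact (uIoc_of_le (zero_le_one' ℝ) ▸ hx).1
  · exact (uIoc_of_le (zero_le_one' ℝ) ▸ hx).1

theorem tendsto_lossTerm_zero_natCeil {x : ℝ} (hx : 0 < x) :
    Tendsto (fun d : ℕ => lossTerm α 0 d ⌈(d:ℝ) * x⌉₊) atTop (𝓝 (x ^ (-α))) := by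
  simpa only [lossTerm, rpow_zero, mul_one] using
    (tendsto_natCeil_mul_div hx.le).rpow_const (Or.inl hx.ne')

theorem tendsto_lossTerm_natCeil (hα : 0 < α) (τ : ℝ) {x : ℝ} (hx : 0 < x) :
    Tendsto (fun d : ℕ => lossTerm α (τ * (d:ℝ) ^ α) d ⌈(d:ℝ) * x⌉₊) atTop
      (𝓝 (x ^ (-α) * exp (-(τ * x ^ (-α))))) := by
  set c : ℕ → ℝ := fun d => ((⌈(d:ℝ) * x⌉₊ : ℝ) / d) ^ (-α)
  have hc : Tendsto c atTop (𝓝 (x ^ (-α))) :=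
    (tendsto_natCeil_mul_div hx.le).rpow_const (Or.inl hx.ne')
  have hdα : Tendsto (fun d : ℕ => (d:ℝ) ^ (-α)) atTop (𝓝 0) :=
    (tendsto_rpow_neg_atTop hα).comp tendsto_natCast_atTop_atTop
  have hsplit : ∀ᶠ d : ℕ in atTop, (⌈(d:ℝ) * x⌉₊ : ℝ) ^ (-α) = c d * (d:ℝ) ^ (-α) := by
    filter_upwards [eventually_gt_atTop 0] with d hd
    rw [← mul_rpow (by positivity) (by positivity), div_mul_cancel₀ _ (by positivity)]
  have hu : Tendsto (fun d : ℕ => -(c d * (d:ℝ) ^ (-α))) atTop (𝓝 0) := by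
    simpa using (hc.mul hdα).neg
  have huv : Tendsto (fun d : ℕ => τ * (d:ℝ) ^ α * -(c d * (d:ℝ) ^ (-α))) atTop
      (𝓝 (-(τ * x ^ (-α)))) := by
    refine (hc.const_mul τ).neg.congr' ?_
    filter_upwards [eventually_gt_atTop 0] with d hd
    have : (d:ℝ) ^ α * (d:ℝ) ^ (-α) = 1 := by
      rw [← rpow_add (by positivity), add_neg_cancel, rpow_zero]
    linear_combination (τ * c d) * this
  refine (hc.mul (tendsto_one_add_rpow_of_tendsto_mul hu huv)).congr' ?_
  filter_upwards [hsplit] with d hsplit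
  rw [lossTerm, hsplit, sub_eq_add_neg]

end LossTerm

theorem integral_Ioi_rpow_mul_exp_neg_eq {α τ : ℝ} (hα : 0 < α) (hτ : 0 < τ) :
    ∫ z in Ioi τ, z ^ (-(1 / α)) * exp (-z)
      = α * τ ^ (1 - 1 / α) * ∫ x in (0:ℝ)..1, x ^ (-α) * exp (-(τ * x ^ (-α))) := by
  set f : ℝ → ℝ := fun x => τ * x ^ (-α)
  have hanti : StrictAntiOn f (Ioo 0 1) := fun x hx y _ hxy =>
    mul_lt_mul_of_pos_left (rpow_lt_rpow_of_neg hx.1 hxy (by linarith)) hτ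
  have himage : f '' Ioo 0 1 = Ioi τ := by
    refine Subset.antisymm ?_ fun z hz => ?_
    · rintro _ ⟨x, hx, rfl⟩
      have h1 : (1:ℝ) ^ (-α) < x ^ (-α) := rpow_lt_rpow_of_neg hx.1 hx.2 (by linarith)
      rw [one_rpow] at h1
      exact lt_mul_of_one_lt_right hτ h1
    · have hz0 : 0 < z := hτ.trans hz
      have hq : 0 < τ / z := div_pos hτ hz0
      refine ⟨(τ / z) ^ (1 / α), ⟨rpow_pos_of_pos hq _,
        rpow_lt_one hq.le ((div_lt_one hz0).2 hz) (by positivity)⟩, ?_⟩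
      simp only [f]
      rw [← rpow_mul hq.le, show 1 / α * -α = -1 by field_simp, rpow_neg_one, inv_div]
      field_simp
  have hderiv : ∀ x ∈ Ioo (0:ℝ) 1,
      HasDerivWithinAt f (τ * (-α * x ^ (-α - 1))) (Ioo 0 1) x := fun x hx =>
    ((hasDerivAt_rpow_const (Or.inl hx.1.ne')).const_mul τ).hasDerivWithinAt
  rw [← himage, integral_image_eq_integral_abs_deriv_smul measurableSet_Ioo hderiv hanti.injOn,
    intervalIntegral.integral_of_le zero_le_one, integral_Ioc_eq_integral_Ioo,
    ← integral_const_mul]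
  refine setIntegral_congr_fun measurableSet_Ioo fun x hx => ?_
  have hx0 := hx.1
  have hpow : (τ * x ^ (-α)) ^ (-(1 / α)) = τ ^ (-(1 / α)) * x := by
    rw [mul_rpow hτ.le (rpow_nonneg hx0.le _), ← rpow_mul hx0.le,
      show -α * -(1 / α) = 1 by field_simp, rpow_one]
  have hx1 : x ^ (-α - 1) * x = x ^ (-α) := by
    rw [rpow_sub_one hx0.ne', div_mul_cancel₀ _ hx0.ne']
  have hτ1 : τ * τ ^ (-(1 / α)) = τ ^ (1 - 1 / α) := by
    rw [sub_eq_add_neg, rpow_add hτ, rpow_one]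
  have hderiv_neg : τ * (-α * x ^ (-α - 1)) < 0 := by
    have := mul_pos hτ (mul_pos hα (rpow_pos_of_pos hx0 (-α - 1)))
    linarith
  simp only [f]
  rw [smul_eq_mul, hpow, abs_of_neg hderiv_neg, ← hτ1]
  linear_combination (α * τ * τ ^ (-(1 / α)) * exp (-(τ * x ^ (-α)))) * hx1

theorem stmt8 (α τ : ℝ) (hα0 : 0 < α) (hα1 : α < 1) (hτ : 0 < τ) :
    Tendsto
      (fun d : ℕ =>
        (∑ k ∈ Finset.Icc 1 d,
          (k : ℝ) ^ (-α) * (1 - (k : ℝ) ^ (-α)) ^ (2 * (τ * (d : ℝ) ^ α / 2))) /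
        (∑ k ∈ Finset.Icc 1 d, (k : ℝ) ^ (-α)))
      atTop
      (nhds (((1 - α) / α) * τ ^ (1 / α - 1) *
        ∫ z in Set.Ioi τ, z ^ (-(1 / α)) * Real.exp (-z))) := by
  have hnum := tendsto_intervalIntegral_lossTerm hα0 hα1 (E := fun d => τ * (d:ℝ) ^ α)
    (fun d => by positivity) fun _ hx => tendsto_lossTerm_natCeil hα0 τ hx
  have hden := tendsto_intervalIntegral_lossTerm hα0 hα1 (E := fun _ => 0)
    (fun _ => le_rfl) fun _ hx => tendsto_lossTerm_zero_natCeil hx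
  rw [integral_rpow (Or.inl (by linarith)), one_rpow, zero_rpow (by linarith),
    neg_add_eq_sub, sub_zero] at hden
  have hlimit : (1 - α) / α * τ ^ (1 / α - 1) * ∫ z in Ioi τ, z ^ (-(1 / α)) * exp (-z)
      = (∫ x in (0:ℝ)..1, x ^ (-α) * exp (-(τ * x ^ (-α)))) / (1 / (1 - α)) := by
    rw [integral_Ioi_rpow_mul_exp_neg_eq hα0 hτ, show 1 - 1 / α = -(1 / α - 1) by ring,
      rpow_neg hτ.le]
    generalize ∫ x in (0:ℝ)..1, x ^ (-α) * exp (-(τ * x ^ (-α))) = I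
    field_simp
  rw [hlimit]
  refine (hnum.div hden (one_div_ne_zero (sub_ne_zero.2 hα1.ne'))).congr' ?_
  filter_upwards [eventually_gt_atTop 0] with d hd
  rw [Pi.div_apply, intervalIntegral_lossTerm _ hd, intervalIntegral_lossTerm _ hd,
    mul_div_mul_left _ _ (by positivity)]
  simp only [rpow_zero, mul_one, mul_div_cancel₀ _ (two_ne_zero' ℝ)]
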